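/- For the nearest-neighbor up-sampling operator X_up[mx+s, my+t] = X[x,y] (s,t ∈ {0,...,m-1}), each spectral coefficient F(X_up)[u,v] equals Σ_{u',v'} α_up(u,v,u',v')·F(X)[u',v'], where α_up(u,v,u',v') = β_up(u,v) if u'-u is a multiple of 2H and v'-v is a multiple of 2W, and 0 otherwise, with β_up(u,v) = Σ_{s=0}^{m-1} Σ_{t=0}^{m-1} exp(-j2π(us/(2mH)+vt/(2mW))). -/

import Mathlib

open Finset

noncomputable def dft (H W : ℤ) (X : ℤ → ℤ → ℂ) (u v : ℤ) : ℂ :=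
  ∑ x ∈ Finset.Icc (-H) (H - 1), ∑ y ∈ Finset.Icc (-W) (W - 1),
    X x y * Complex.exp (-(2 * (Real.pi : ℂ) * Complex.I) *
      ((u : ℂ) * (x : ℂ) / (2 * (H : ℂ)) + (v : ℂ) * (y : ℂ) / (2 * (W : ℂ))))

noncomputable def idft (H W : ℤ) (F : ℤ → ℤ → ℂ) (x y : ℤ) : ℂ :=
  (1 / (4 * (H : ℂ) * (W : ℂ))) *
    ∑ u ∈ Finset.Icc (-H) (H - 1), ∑ v ∈ Finset.Icc (-W) (W - 1),
      F u v * Complex.exp ((2 * (Real.pi : ℂ) * Complex.I) *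
        ((u : ℂ) * (x : ℂ) / (2 * (H : ℂ)) + (v : ℂ) * (y : ℂ) / (2 * (W : ℂ))))

noncomputable def crop (H W H' W' : ℤ) (F : ℤ → ℤ → ℂ) (u v : ℤ) : ℂ :=
  (((H' * W' : ℤ) : ℂ) / ((H * W : ℤ) : ℂ)) * F u v

noncomputable def upsample (m : ℤ) (X : ℤ → ℤ → ℂ) (x y : ℤ) : ℂ :=
  X (Int.fdiv x m) (Int.fdiv y m)

noncomputable def betaUp (H W m : ℤ) (u v : ℤ) : ℂ :=
  ∑ s ∈ Finset.Icc (0 : ℤ) (m - 1), ∑ t ∈ Finset.Icc (0 : ℤ) (m - 1),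
    Complex.exp (-(2 * (Real.pi : ℂ) * Complex.I) *
      ((u : ℂ) * (s : ℂ) / (2 * (m : ℂ) * (H : ℂ)) + (v : ℂ) * (t : ℂ) / (2 * (m : ℂ) * (W : ℂ))))

noncomputable def alphaUp (H W m : ℤ) (u v u' v' : ℤ) : ℂ :=
  if (2 * H ∣ u' - u) ∧ (2 * W ∣ v' - v) then betaUp H W m u v else 0

/-!
Writing `x = m x' + s` with `0 ≤ s < m`, the up-sampled image is constant on each `m × m` block and
the phase of the fine-grid DFT factors into the coarse-grid phase at `(x', y')` times a phase
depending only on the offset `(s, t)`. Hence `F(X_up)[u, v] = β_up(u, v) · F(X)[u, v]`. The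
coarse spectrum is `2H × 2W`-periodic, and exactly one `(u', v')` in the coarse index box is
congruent to `(u, v)`, so the sum defining the right-hand side has a single nonzero term.
-/

noncomputable def dftPhase (H W u v x y : ℤ) : ℂ :=
  Complex.exp (-(2 * (Real.pi : ℂ) * Complex.I) *
    ((u : ℂ) * (x : ℂ) / (2 * (H : ℂ)) + (v : ℂ) * (y : ℂ) / (2 * (W : ℂ))))

lemma dft_eq_sum_dftPhase (H W : ℤ) (X : ℤ → ℤ → ℂ) (u v : ℤ) :
    dft H W X u v = ∑ x ∈ Icc (-H) (H - 1), ∑ y ∈ Icc (-W) (W - 1), X x y * dftPhase H W u v x y :=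
  rfl

lemma betaUp_eq_sum_dftPhase (H W m u v : ℤ) :
    betaUp H W m u v =
      ∑ s ∈ Icc (0 : ℤ) (m - 1), ∑ t ∈ Icc (0 : ℤ) (m - 1), dftPhase (m * H) (m * W) u v s t := by
  simp only [betaUp, dftPhase, Int.cast_mul, mul_assoc]

lemma dftPhase_mul_add {m : ℤ} (hm : m ≠ 0) (H W u v x y s t : ℤ) :
    dftPhase (m * H) (m * W) u v (m * x + s) (m * y + t) =
      dftPhase H W u v x y * dftPhase (m * H) (m * W) u v s t := by
  have hm' : (m : ℂ) ≠ 0 := Int.cast_ne_zero.mpr hm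
  have cancel (a b : ℂ) : (m : ℂ) * a / (2 * ((m : ℂ) * b)) = a / (2 * b) := by
    rw [mul_left_comm, mul_div_mul_left _ _ hm']
  simp only [dftPhase, ← Complex.exp_add]
  congr 1
  push_cast
  rw [← cancel (u * x) H, ← cancel (v * y) W]
  ring

lemma dftPhase_eq_of_dvd_sub {H W : ℤ} (hH : H ≠ 0) (hW : W ≠ 0) {u v u' v' : ℤ}
    (hu : 2 * H ∣ u' - u) (hv : 2 * W ∣ v' - v) (x y : ℤ) :
    dftPhase H W u' v' x y = dftPhase H W u v x y := by
  obtain ⟨k, hk⟩ := hu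
  obtain ⟨l, hl⟩ := hv
  obtain rfl : u' = u + 2 * H * k := by omega
  obtain rfl : v' = v + 2 * W * l := by omega
  have hH' : (H : ℂ) ≠ 0 := Int.cast_ne_zero.mpr hH
  have hW' : (W : ℂ) ≠ 0 := Int.cast_ne_zero.mpr hW
  have hphase : -(2 * (Real.pi : ℂ) * Complex.I) *
      (((u + 2 * H * k : ℤ) : ℂ) * x / (2 * H) + ((v + 2 * W * l : ℤ) : ℂ) * y / (2 * W)) =
      -(2 * (Real.pi : ℂ) * Complex.I) * ((u : ℂ) * x / (2 * H) + (v : ℂ) * y / (2 * W)) +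
        ((-(k * x + l * y) : ℤ) : ℂ) * (2 * (Real.pi : ℂ) * Complex.I) := by
    push_cast
    field_simp
    ring
  rw [dftPhase, dftPhase, hphase, Complex.exp_add, Complex.exp_int_mul_two_pi_mul_I, mul_one]

lemma dft_eq_of_dvd_sub {H W : ℤ} (hH : H ≠ 0) (hW : W ≠ 0) (X : ℤ → ℤ → ℂ) {u v u' v' : ℤ}
    (hu : 2 * H ∣ u' - u) (hv : 2 * W ∣ v' - v) :
    dft H W X u' v' = dft H W X u v := by
  simp only [dft_eq_sum_dftPhase, dftPhase_eq_of_dvd_sub hH hW hu hv]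

lemma sum_Icc_eq_sum_blocks {M : Type*} [AddCommMonoid M] {m : ℤ} (hm : 0 < m) (H : ℤ)
    (f : ℤ → M) :
    ∑ x ∈ Icc (-(m * H)) (m * H - 1), f x =
      ∑ x ∈ Icc (-H) (H - 1), ∑ s ∈ Icc (0 : ℤ) (m - 1), f (m * x + s) := by
  rw [← sum_product']
  refine sum_nbij' (fun x => (x / m, x % m)) (fun p => m * p.1 + p.2) ?_ ?_ ?_ ?_ ?_
  · intro x hx
    simp only [mem_Icc, mem_product] at hx ⊢
    have := Int.emod_nonneg x hm.ne'
    have := Int.emod_lt_of_pos x hm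
    rw [Int.le_ediv_iff_mul_le hm, Int.le_sub_one_iff, Int.ediv_lt_iff_lt_mul hm]
    constructor <;> constructor <;> linarith
  · rintro ⟨x, s⟩ hxs
    simp only [mem_Icc, mem_product] at hxs ⊢
    constructor <;> nlinarith
  · intro x _
    exact Int.mul_ediv_add_emod x m
  · rintro ⟨x, s⟩ hxs
    simp only [mem_Icc, mem_product] at hxs
    exact Prod.ext_iff.mpr ((Int.ediv_emod_unique hm).mpr ⟨add_comm _ _, hxs.2.1, by omega⟩)
  · intro x _
    rw [Int.mul_ediv_add_emod x m]

lemma upsample_mul_add {m : ℤ} (hm : 0 < m) (X : ℤ → ℤ → ℂ) (x y : ℤ) {s t : ℤ}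
    (hs : s ∈ Icc (0 : ℤ) (m - 1)) (ht : t ∈ Icc (0 : ℤ) (m - 1)) :
    upsample m X (m * x + s) (m * y + t) = X x y := by
  have fdiv_mul_add {a r : ℤ} (hr : r ∈ Icc (0 : ℤ) (m - 1)) : Int.fdiv (m * a + r) m = a := by
    rw [mem_Icc] at hr
    rw [Int.fdiv_eq_ediv_of_nonneg _ hm.le, Int.mul_add_ediv_left _ _ hm.ne',
      Int.ediv_eq_zero_of_lt hr.1 (by omega), add_zero]
  rw [upsample, fdiv_mul_add hs, fdiv_mul_add ht]

lemma dft_upsample {m : ℤ} (hm : 0 < m) (H W : ℤ) (X : ℤ → ℤ → ℂ) (u v : ℤ) :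
    dft (m * H) (m * W) (upsample m X) u v = betaUp H W m u v * dft H W X u v := by
  rw [dft_eq_sum_dftPhase, dft_eq_sum_dftPhase, betaUp_eq_sum_dftPhase, sum_Icc_eq_sum_blocks hm,
    mul_comm (∑ s ∈ _, _), sum_mul_sum]
  refine sum_congr rfl fun x _ => sum_congr rfl fun s hs => ?_
  rw [sum_Icc_eq_sum_blocks hm, sum_mul_sum]
  refine sum_congr rfl fun y _ => sum_congr rfl fun t ht => ?_
  rw [upsample_mul_add hm X x y hs ht, dftPhase_mul_add hm.ne', mul_assoc]

lemma sum_Icc_ite_dvd_sub {M : Type*} [AddCommMonoid M] {H : ℤ} (hH : 0 < H) (u : ℤ)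
    (f : ℤ → M) (hf : ∀ u', 2 * H ∣ u' - u → f u' = f u) :
    ∑ u' ∈ Icc (-H) (H - 1), (if 2 * H ∣ u' - u then f u' else 0) = f u := by
  set u₀ := (u + H) % (2 * H) - H
  have hu₀ : u₀ ∈ Icc (-H) (H - 1) := by
    have := Int.emod_nonneg (u + H) (by omega : 2 * H ≠ 0)
    have := Int.emod_lt_of_pos (u + H) (by omega : 0 < 2 * H)
    rw [mem_Icc]
    omega
  have hdvd : 2 * H ∣ u₀ - u := ⟨-((u + H) / (2 * H)), by simp only [u₀, Int.emod_def]; ring⟩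
  rw [sum_eq_single_of_mem u₀ hu₀, if_pos hdvd, hf u₀ hdvd]
  intro u' hu' hne
  rw [if_neg]
  intro hdvd'
  have hdiff : 2 * H ∣ u' - u₀ := by simpa using dvd_sub hdvd' hdvd
  rw [mem_Icc] at hu₀ hu'
  exact hne (sub_eq_zero.mp (Int.eq_zero_of_abs_lt_dvd hdiff (by rw [abs_lt]; omega)))

theorem upsample_spectrum (H W m : ℤ) (hm : 0 < m) (hH : 0 < H) (hW : 0 < W)
    (X : ℤ → ℤ → ℂ) (u v : ℤ) :
    dft (m * H) (m * W) (upsample m X) u v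
      = ∑ u' ∈ Finset.Icc (-H) (H - 1), ∑ v' ∈ Finset.Icc (-W) (W - 1),
          alphaUp H W m u v u' v' * dft H W X u' v' := by
  have hdft {u' v' : ℤ} : 2 * H ∣ u' - u → 2 * W ∣ v' - v → dft H W X u' v' = dft H W X u v :=
    dft_eq_of_dvd_sub hH.ne' hW.ne' X
  have hu : 2 * H ∣ u - u := by simp
  simp only [alphaUp, ite_and, ite_mul, zero_mul, sum_ite_irrel, sum_const_zero]
  rw [dft_upsample hm, sum_Icc_ite_dvd_sub hH u]
  · rw [sum_Icc_ite_dvd_sub hW v _ fun v' hv => by rw [hdft hu hv]]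
  · intro u' hu'
    refine sum_congr rfl fun v' _ => ?_
    split_ifs with hv
    · rw [hdft hu' hv, hdft hu hv]
    · rfl
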